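/- Subject expansion holds for η: if M is a linear λ-term, M η-reduces to N, and Γ ⊢ N : σ, then Γ ⊢ M : σ. In particular, if x is not free in M and Γ ⊢ M : σ, then Γ ⊢ λx. M x : σ. -/

import Mathlib

namespace TypeIso

open Relation

/-- Untyped λ-terms with named variables. -/
inductive Term : Type
  | var : ℕ → Term
  | app : Term → Term → Term
  | lam : ℕ → Term → Term
deriving DecidableEq

namespace Term

/-- Free variables. -/
def fv : Term → Finset ℕ
  | var x => {x}
  | app M N => fv M ∪ fv N
  | lam x M => fv M \ {x}

/-- Substitution `M[N/x]` (naive; adequate for the linear terms considered). -/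
def subst : Term → ℕ → Term → Term
  | var y, x, N => if y = x then N else var y
  | app M₁ M₂, x, N => app (subst M₁ x N) (subst M₂ x N)
  | lam y M, x, N => if y = x then lam y M else lam y (subst M x N)

end Term

open Term

/-- One-step β-reduction. -/
inductive Beta : Term → Term → Prop
  | beta (x M N) : Beta (Term.app (Term.lam x M) N) (Term.subst M x N)
  | appL {M M'} (N) : Beta M M' → Beta (Term.app M N) (Term.app M' N)
  | appR (M) {N N'} : Beta N N' → Beta (Term.app M N) (Term.app M N')
  | lam (x) {M M'} : Beta M M' → Beta (Term.lam x M) (Term.lam x M')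

/-- One-step η-reduction. -/
inductive Eta : Term → Term → Prop
  | eta (x M) : x ∉ fv M → Eta (Term.lam x (Term.app M (Term.var x))) M
  | appL {M M'} (N) : Eta M M' → Eta (Term.app M N) (Term.app M' N)
  | appR (M) {N N'} : Eta N N' → Eta (Term.app M N) (Term.app M N')
  | lam (x) {M M'} : Eta M M' → Eta (Term.lam x M) (Term.lam x M')

def BetaStar : Term → Term → Prop := ReflTransGen Beta
def EtaStar : Term → Term → Prop := ReflTransGen Eta
/-- η-expansion: the converse of one-step η-reduction. -/
def EtaExp : Term → Term → Prop := fun a b => Eta b a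
def EtaExpStar : Term → Term → Prop := ReflTransGen EtaExp
def BetaConv : Term → Term → Prop := EqvGen Beta
def BetaEta : Term → Term → Prop := fun a b => Beta a b ∨ Eta a b
def BetaEtaConv : Term → Term → Prop := EqvGen BetaEta

def BetaEtaRed : Term → Term → Prop := ReflTransGen BetaEta

/-- `appList h [a₁,…,aₙ] = h a₁ … aₙ`. -/
def appList (h : Term) (args : List Term) : Term := args.foldl Term.app h
/-- `lamList [y₁,…,yₙ] M = λ y₁ … yₙ. M`. -/
def lamList (xs : List ℕ) (body : Term) : Term := xs.foldr Term.lam body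

/-- β-normal finite hereditary permutators:
`λ x y₁ … yₙ. x (P₁ y_{π(1)}) … (Pₙ y_{π(n)})` with each `Pᵢ` an FHP. -/
inductive FHPnf : Term → Prop
  | mk (x : ℕ) (ys : List ℕ) (Ps : List Term) (π : Equiv.Perm (Fin ys.length))
      (hlen : Ps.length = ys.length)
      (hx : x ∉ ys) (hnd : ys.Nodup)
      (hPs : ∀ P ∈ Ps, FHPnf P) :
      FHPnf (Term.lam x (lamList ys (appList (Term.var x)
        (List.ofFn fun i : Fin ys.length =>
          Term.app (Ps.get (Fin.cast hlen.symm i)) (Term.var (ys.get (π i)))))))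

/-- Finite hereditary permutators (modulo β-conversion). -/
def FHP (M : Term) : Prop := ∃ N, BetaConv M N ∧ FHPnf N

/-- β-normal finite hereditary identities:
`λ x y₁ … yₙ. x (Id₁ y₁) … (Idₙ yₙ)` with each `Idᵢ` an FHI. -/
inductive FHInf : Term → Prop
  | mk (x : ℕ) (ys : List ℕ) (Ids : List Term)
      (hlen : Ids.length = ys.length)
      (hx : x ∉ ys) (hnd : ys.Nodup)
      (hIds : ∀ P ∈ Ids, FHInf P) :
      FHInf (Term.lam x (lamList ys (appList (Term.var x)
        (List.ofFn fun i : Fin ys.length =>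
          Term.app (Ids.get (Fin.cast hlen.symm i)) (Term.var (ys.get i))))))

/-- Finite hereditary identities (modulo β-conversion). -/
def FHI (M : Term) : Prop := ∃ N, BetaConv M N ∧ FHInf N

/-- Types with atoms, ω, arrow, intersection and union. -/
inductive Ty : Type
  | atom : ℕ → Ty
  | omega : Ty
  | arr : Ty → Ty → Ty
  | and : Ty → Ty → Ty
  | or : Ty → Ty → Ty
deriving DecidableEq

/-- Semantic type equivalence `≅`: the least congruence with
`φ ≅ ω→φ`, `ω ≅ ω→ω`, `σ ≅ σ∧ω ≅ ω∧σ`, `ω ≅ σ∨ω ≅ ω∨σ`. -/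
inductive SemEq : Ty → Ty → Prop
  | refl (σ) : SemEq σ σ
  | symm : SemEq σ τ → SemEq τ σ
  | trans : SemEq σ τ → SemEq τ ρ → SemEq σ ρ
  | arr : SemEq σ σ' → SemEq τ τ' → SemEq (Ty.arr σ τ) (Ty.arr σ' τ')
  | and : SemEq σ σ' → SemEq τ τ' → SemEq (Ty.and σ τ) (Ty.and σ' τ')
  | or : SemEq σ σ' → SemEq τ τ' → SemEq (Ty.or σ τ) (Ty.or σ' τ')
  | atomFun (a) : SemEq (Ty.atom a) (Ty.arr Ty.omega (Ty.atom a))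
  | omegaFun : SemEq Ty.omega (Ty.arr Ty.omega Ty.omega)
  | andOmegaR (σ) : SemEq σ (Ty.and σ Ty.omega)
  | andOmegaL (σ) : SemEq σ (Ty.and Ty.omega σ)
  | orOmegaR (σ) : SemEq Ty.omega (Ty.or σ Ty.omega)
  | orOmegaL (σ) : SemEq Ty.omega (Ty.or Ty.omega σ)

/-- Relevant environments, considered up to permutation in the rules. -/
abbrev Env := List (ℕ × Ty)

def Env.dom (Γ : Env) : List ℕ := Γ.map Prod.fst

def EnvDisj (Γ₁ Γ₂ : Env) : Prop := ∀ x, x ∈ Γ₁.dom → x ∉ Γ₂.dom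

/-- The intersection-union type assignment system for linear λ-terms (Figure 1). -/
inductive Deriv : Env → Term → Ty → Prop
  | ax (x σ) : Deriv [(x, σ)] (Term.var x) σ
  | eqv {Γ M σ τ} : Deriv Γ M σ → SemEq σ τ → Deriv Γ M τ
  | perm {Γ Γ' M σ} : Deriv Γ M σ → Γ.Perm Γ' → Deriv Γ' M σ
  | arrI {Γ x σ M τ} : Deriv ((x, σ) :: Γ) M τ → Deriv Γ (Term.lam x M) (Ty.arr σ τ)
  | arrE {Γ₁ Γ₂ M N σ τ} : Deriv Γ₁ M (Ty.arr σ τ) → Deriv Γ₂ N σ → EnvDisj Γ₁ Γ₂ →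
      Deriv (Γ₁ ++ Γ₂) (Term.app M N) τ
  | andI {Γ M σ τ} : Deriv Γ M σ → Deriv Γ M τ → Deriv Γ M (Ty.and σ τ)
  | andE₁ {Γ M σ τ} : Deriv Γ M (Ty.and σ τ) → Deriv Γ M σ
  | andE₂ {Γ M σ τ} : Deriv Γ M (Ty.and σ τ) → Deriv Γ M τ
  | orI₁ {Γ M σ τ} : Deriv Γ M σ → Deriv Γ M (Ty.or σ τ)
  | orI₂ {Γ M σ τ} : Deriv Γ M σ → Deriv Γ M (Ty.or τ σ)
  | orE {Γ₁ Γ₂ x M N σ τ ζ ρ} :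
      Deriv ((x, Ty.and σ ζ) :: Γ₁) M ρ →
      Deriv ((x, Ty.and τ ζ) :: Γ₁) M ρ →
      Deriv Γ₂ N (Ty.and (Ty.or σ τ) ζ) → EnvDisj Γ₁ Γ₂ →
      Deriv (Γ₁ ++ Γ₂) (Term.subst M x N) ρ

/-- Linear λ-terms: every free or bound variable occurs exactly once. -/
inductive Linear : Term → Prop
  | var (x) : Linear (Term.var x)
  | app {M N} : Linear M → Linear N → Disjoint (fv M) (fv N) → Linear (Term.app M N)
  | lam {x M} : Linear M → x ∈ fv M → Linear (Term.lam x M)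

/-- A variable fresh for a finite set. -/
def freshVar (s : Finset ℕ) : ℕ := (s.sup id) + 1

/-- Composition `λx. P (Q x)` with a fresh `x`. -/
def tcomp (P Q : Term) : Term :=
  Term.lam (freshVar (fv P ∪ fv Q))
    (Term.app P (Term.app Q (Term.var (freshVar (fv P ∪ fv Q)))))

/-- `P` and `Q` are inverse of each other: both compositions are βη-equal to the identity. -/
def InvPair (P Q : Term) : Prop :=
  ∃ x, BetaEtaConv (tcomp P Q) (Term.lam x (Term.var x)) ∧
       BetaEtaConv (tcomp Q P) (Term.lam x (Term.var x))

/-- Type isomorphism `σ ≈ τ`. -/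
def TyIso (σ τ : Ty) : Prop :=
  ∃ P Q, FHP P ∧ FHP Q ∧ InvPair P Q ∧
    Deriv [] P (Ty.arr σ τ) ∧ Deriv [] Q (Ty.arr τ σ)

/-- Strong type isomorphism `σ ≈ₛ τ`: proved by a finite hereditary identity. -/
def StrongIso (σ τ : Ty) : Prop :=
  ∃ Id, FHI Id ∧ Deriv [] Id (Ty.arr σ τ) ∧ Deriv [] Id (Ty.arr τ σ)

/-- The normalisation pre-order `≤` on types. -/
inductive NormLe : Ty → Ty → Prop
  | refl (σ) : NormLe σ σ
  | trans {σ τ ρ} : NormLe σ τ → NormLe τ ρ → NormLe σ ρ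
  | leOmega (σ) : NormLe σ Ty.omega
  | andE₁ (σ τ) : NormLe (Ty.and σ τ) σ
  | andE₂ (σ τ) : NormLe (Ty.and σ τ) τ
  | orI₁ (σ τ) : NormLe σ (Ty.or σ τ)
  | orI₂ (σ τ) : NormLe τ (Ty.or σ τ)
  | andI {σ τ ρ} : NormLe σ τ → NormLe σ ρ → NormLe σ (Ty.and τ ρ)
  | orE {σ τ ρ} : NormLe σ τ → NormLe ρ τ → NormLe (Ty.or σ ρ) τ
  | atomArr (a σ) : NormLe (Ty.atom a) (Ty.arr σ (Ty.atom a))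
  | omegaArr (σ) : NormLe Ty.omega (Ty.arr σ Ty.omega)
  | arr {σ σ' τ τ'} : NormLe σ' σ → NormLe τ τ' → NormLe (Ty.arr σ τ) (Ty.arr σ' τ')

/-- Inner type normalisation rules `σ ⇝ τ`. -/
inductive InnerStep : Ty → Ty → Prop
  | atomRule (a) : InnerStep (Ty.arr Ty.omega (Ty.atom a)) (Ty.atom a)
  | omegaRule {σ} : NormLe Ty.omega σ → σ ≠ Ty.omega → InnerStep σ Ty.omega
  | distArrAnd (σ τ ρ) :
      InnerStep (Ty.arr σ (Ty.and τ ρ)) (Ty.and (Ty.arr σ τ) (Ty.arr σ ρ))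
  | distAndArr (σ τ ρ ζ) :
      InnerStep (Ty.arr (Ty.and (Ty.or σ τ) ρ) ζ)
                (Ty.arr (Ty.or (Ty.and σ ρ) (Ty.and τ ρ)) ζ)
  | distOrArr (σ τ ρ) :
      InnerStep (Ty.arr (Ty.or σ τ) ρ) (Ty.and (Ty.arr σ ρ) (Ty.arr τ ρ))
  | distArrOr (σ τ ρ ζ) :
      InnerStep (Ty.arr σ (Ty.or (Ty.and τ ρ) ζ))
                (Ty.arr σ (Ty.and (Ty.or τ ζ) (Ty.or ρ ζ)))
  | eraseAnd {σ τ} : NormLe σ τ → InnerStep (Ty.and σ τ) σ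
  | eraseOr {σ τ} : NormLe σ τ → InnerStep (Ty.or σ τ) τ

/-- Type contexts. -/
inductive TyCtx : Type
  | hole : TyCtx
  | arrL : TyCtx → Ty → TyCtx
  | arrR : Ty → TyCtx → TyCtx
  | andL : TyCtx → Ty → TyCtx
  | andR : Ty → TyCtx → TyCtx
  | orL : TyCtx → Ty → TyCtx
  | orR : Ty → TyCtx → TyCtx

/-- Filling the hole of a type context. -/
def TyCtx.fill : TyCtx → Ty → Ty
  | TyCtx.hole, τ => τ
  | TyCtx.arrL C σ, τ => Ty.arr (C.fill τ) σ
  | TyCtx.arrR σ C, τ => Ty.arr σ (C.fill τ)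
  | TyCtx.andL C σ, τ => Ty.and (C.fill τ) σ
  | TyCtx.andR σ C, τ => Ty.and σ (C.fill τ)
  | TyCtx.orL C σ, τ => Ty.or (C.fill τ) σ
  | TyCtx.orR σ C, τ => Ty.or σ (C.fill τ)

/-- Top normalisation rules `σ ⟹ τ`: contextual closure of the inner rules,
plus `(σ∧τ)∨ρ ⟹ (σ∨ρ)∧(τ∨ρ)` at the top or in right-hand sides of arrows. -/
inductive TopStep : Ty → Ty → Prop
  | ctx {σ τ} (C : TyCtx) : InnerStep σ τ → TopStep (C.fill σ) (C.fill τ)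
  | dist (σ τ ρ) :
      TopStep (Ty.or (Ty.and σ τ) ρ) (Ty.and (Ty.or σ ρ) (Ty.or τ ρ))
  | arrR {τ τ'} (σ) : TopStep τ τ' → TopStep (Ty.arr σ τ) (Ty.arr σ τ')

open Classical in
/-- The normal form of a type w.r.t. the top normalisation rules. -/
noncomputable def nf (σ : Ty) : Ty :=
  if h : ∃ ν, Relation.ReflTransGen TopStep σ ν ∧ ∀ ρ, ¬ TopStep ν ρ then h.choose else σ

/-- `mkArrow [ξ₁,…,ξₙ] μ = ξ₁ → … → ξₙ → μ`. -/
def mkArrow (args : List Ty) (res : Ty) : Ty := args.foldr Ty.arr res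

/-- Similarity between sequences of normal types. -/
inductive TySim : List Ty → List Ty → Prop
  | refl (l) : TySim l l
  | symm {l r} : TySim l r → TySim r l
  | trans {l r s} : TySim l r → TySim r s → TySim l s
  | mergeAnd (l₁ l₂ r₁ r₂ : List Ty) (η₁ η₂ θ₁ θ₂ : Ty) :
      l₁.length = r₁.length →
      TySim (l₁ ++ η₁ :: η₂ :: l₂) (r₁ ++ θ₁ :: θ₂ :: r₂) →
      TySim (l₁ ++ nf (Ty.and η₁ η₂) :: l₂) (r₁ ++ nf (Ty.and θ₁ θ₂) :: r₂)
  | mergeOr (l₁ l₂ r₁ r₂ : List Ty) (η₁ η₂ θ₁ θ₂ : Ty) :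
      l₁.length = r₁.length →
      TySim (l₁ ++ η₁ :: η₂ :: l₂) (r₁ ++ θ₁ :: θ₂ :: r₂) →
      TySim (l₁ ++ nf (Ty.or η₁ η₂) :: l₂) (r₁ ++ nf (Ty.or θ₁ θ₂) :: r₂)
  | arrow (m n : ℕ) (ξ χ : Fin n → Fin m → Ty) (μ ν : Fin m → Ty)
      (π : Equiv.Perm (Fin n)) :
      (∀ i, TySim (List.ofFn (ξ i)) (List.ofFn (χ i))) →
      TySim (List.ofFn μ) (List.ofFn ν) →
      TySim (List.ofFn fun j => nf (mkArrow (List.ofFn fun i => ξ i j) (μ j)))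
            (List.ofFn fun j => nf (mkArrow (List.ofFn fun i => χ (π i) j) (ν j)))

/-!
Root η-expansion `λx. M x` is typable at the type of `M`, for any `x`. When `x` is not in the
context this is an induction on the type; at a union type, a fresh variable typed by either
disjunct is expanded and `M` is substituted for it by (∨E). The same substitution handles an
arbitrary `x`, since the naive substitution of (∨E) may capture it.

Expansion below the root is an induction on the derivation of the reduct. The only hard case is
(∨E), which concludes `M[N/x]`: since contexts are relevant, `x` occurs at most once in `M`, so
an η-expansion of `M[N/x]` is `M'[N/x]` or `M[N'/x]` with `M'`, `N'` η-expansions of `M`, `N`,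
unless the new redex binds `x`. Renaming `x` apart beforehand rules this out; renaming preserves
the height of derivations, so the induction is on height.
-/

namespace Term

def vars : Term → Finset ℕ
  | var x => {x}
  | app M N => vars M ∪ vars N
  | lam x M => insert x (vars M)

def occ : Term → ℕ → ℕ
  | var y, x => if y = x then 1 else 0
  | app M N, x => occ M x + occ N x
  | lam y M, x => if y = x then 0 else occ M x

def mapVars (f : ℕ → ℕ) : Term → Term
  | var x => var (f x)
  | app M N => app (mapVars f M) (mapVars f N)
  | lam x M => lam (f x) (mapVars f M)

theorem fv_subset_vars (M : Term) : fv M ⊆ vars M := by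
  induction M with
  | var x => simp [fv, vars]
  | app M N ihM ihN => exact Finset.union_subset_union ihM ihN
  | lam x M ih => exact (Finset.sdiff_subset).trans (ih.trans (Finset.subset_insert _ _))

theorem occ_pos_iff_mem_fv (M : Term) (x : ℕ) : 0 < occ M x ↔ x ∈ fv M := by
  induction M with
  | var y => by_cases h : y = x <;> simp [occ, fv, h, Ne.symm]
  | app M N ihM ihN => simp only [occ, fv, Finset.mem_union, ← ihM, ← ihN]; omega
  | lam y M ih => by_cases h : y = x <;> simp [occ, fv, h, ih, Ne.symm]

theorem occ_eq_zero_iff_not_mem_fv (M : Term) (x : ℕ) : occ M x = 0 ↔ x ∉ fv M := by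
  rw [← occ_pos_iff_mem_fv]; omega

theorem subst_of_not_mem_fv {M : Term} {x : ℕ} (N : Term) (h : x ∉ fv M) : subst M x N = M := by
  induction M with
  | var y => simp_all [fv, subst, Ne.symm]
  | app M₁ M₂ ih₁ ih₂ => simp_all [fv, subst]
  | lam y M ih =>
    by_cases hy : y = x
    · simp [subst, hy]
    · simp only [fv, Finset.mem_sdiff, Finset.mem_singleton, not_and, not_not] at h
      simp [subst, hy, ih (fun hx => hy (h hx).symm)]

theorem mem_fv_subst {M N : Term} {x v : ℕ} (h : v ∈ fv (subst M x N)) :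
    (v ∈ fv M ∧ v ≠ x) ∨ v ∈ fv N := by
  induction M with
  | var y => by_cases hy : y = x <;> simp_all [fv, subst]
  | app M₁ M₂ ih₁ ih₂ =>
    simp only [subst, fv, Finset.mem_union] at h ⊢
    rcases h with h | h
    · rcases ih₁ h with h | h <;> tauto
    · rcases ih₂ h with h | h <;> tauto
  | lam y M ih =>
    by_cases hy : y = x
    · subst hy; simp_all [subst, fv]
    · simp only [subst, hy, if_false, fv, Finset.mem_sdiff, Finset.mem_singleton] at h ⊢
      rcases ih h.1 with h' | h' <;> tauto

theorem mem_fv_subst_of_mem {M : Term} {x v : ℕ} (N : Term) (h : v ∈ fv M) (hvx : v ≠ x) :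
    v ∈ fv (subst M x N) := by
  induction M with
  | var y => simp_all [fv, subst]
  | app M₁ M₂ ih₁ ih₂ => simp only [fv, subst, Finset.mem_union] at h ⊢; tauto
  | lam y M ih => by_cases hy : y = x <;> simp_all [fv, subst]

theorem mem_vars_subst_of_mem_fv {M N : Term} {x v : ℕ} (hx : x ∈ fv M) (hv : v ∈ vars N) :
    v ∈ vars (subst M x N) := by
  induction M with
  | var y => simp_all [fv, subst]
  | app M₁ M₂ ih₁ ih₂ => simp only [fv, vars, subst, Finset.mem_union] at hx ⊢; tauto
  | lam y M ih =>
    simp only [fv, Finset.mem_sdiff, Finset.mem_singleton] at hx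
    simp [vars, subst, Ne.symm hx.2, ih hx.1]

theorem occ_subst_le (M : Term) (a : ℕ) (N : Term) (v : ℕ) :
    occ (subst M a N) v ≤ (if v = a then 0 else occ M v) + occ M a * occ N v := by
  induction M with
  | var y => by_cases hya : y = a <;> by_cases hyv : y = v <;> simp_all [subst, occ]
  | app M₁ M₂ ih₁ ih₂ => split_ifs at ih₁ ih₂ ⊢ <;> simp only [subst, occ] <;> nlinarith
  | lam y M ih =>
    by_cases hya : y = a
    · subst hya; by_cases hyv : y = v <;> simp_all [subst, occ, Ne.symm]
    · by_cases hyv : y = v <;> simp_all [subst, occ]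

theorem vars_subst_subset (M : Term) (x : ℕ) (N : Term) :
    vars (subst M x N) ⊆ vars M ∪ vars N := by
  induction M with
  | var y => by_cases h : y = x <;> simp [subst, vars, h]
  | app M₁ M₂ ih₁ ih₂ =>
    simp only [subst, vars]
    exact Finset.union_subset (ih₁.trans (by grind)) (ih₂.trans (by grind))
  | lam y M ih =>
    by_cases h : y = x
    · simp [subst, h]
    · simp only [subst, h, if_false, vars]
      exact Finset.insert_subset (by simp) (ih.trans (by grind))

theorem subst_subst_var {M : Term} {a y : ℕ} (N : Term) (hy : y ∉ vars M) :
    subst (subst M a (var y)) y N = subst M a N := by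
  induction M with
  | var w => by_cases h : w = a <;> simp_all [subst, vars, Ne.symm]
  | app M₁ M₂ ih₁ ih₂ => simp_all [subst, vars]
  | lam w M ih =>
    simp only [vars, Finset.mem_insert, not_or] at hy
    by_cases h : w = a
    · simp [subst, h, Ne.symm (h ▸ hy.1),
        subst_of_not_mem_fv N (fun hm => hy.2 (fv_subset_vars M hm))]
    · simp [subst, h, Ne.symm hy.1, ih hy.2]

theorem subst_comm_var {M N : Term} {x x' y : ℕ} (hxx' : x ≠ x') (hyx' : y ≠ x')
    (hxN : x ∉ fv N) :
    subst (subst M x (var y)) x' N = subst (subst M x' N) x (var y) := by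
  induction M with
  | var w =>
    by_cases h : w = x
    · simp [subst, h, hxx', hyx']
    · by_cases h' : w = x' <;> simp [subst, h, h', Ne.symm hxx', subst_of_not_mem_fv _ hxN]
  | app M₁ M₂ ih₁ ih₂ => simp [subst, ih₁, ih₂]
  | lam w M ih =>
    by_cases h : w = x
    · simp [subst, h, hxx']
    · by_cases h' : w = x' <;> simp [subst, h, h', Ne.symm hxx', ih]

theorem subst_subst_of_mem_fv {M N P : Term} {a x : ℕ} (hocc : occ M a ≤ 1)
    (hxM : x ∉ fv M ∨ x = a) (hx : x ∈ fv (subst M a N)) :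
    subst M a (subst N x P) = subst (subst M a N) x P := by
  induction M with
  | var w =>
    by_cases h : w = a
    · simp [subst, h]
    · have hwx : w ≠ x := by rintro rfl; simp_all [fv]
      simp [subst, h, hwx]
  | app M₁ M₂ ih₁ ih₂ =>
    simp only [occ] at hocc
    simp only [subst, fv, Finset.mem_union] at hx hxM ⊢
    have hfix : ∀ B : Term, a ∉ fv B → (x ∉ fv B ∨ x = a) →
        x ∉ fv (subst B a N) ∧ subst B a (subst N x P) = subst (subst B a N) x P := by
      intro B ha hxB
      have hx : x ∉ fv B := by rcases hxB with h | rfl <;> assumption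
      simp [subst_of_not_mem_fv _ ha, subst_of_not_mem_fv _ hx, hx]
    by_cases ha : a ∈ fv M₁
    · have ha₂ : a ∉ fv M₂ := by
        have := (occ_pos_iff_mem_fv _ _).2 ha
        rw [← occ_eq_zero_iff_not_mem_fv]; omega
      obtain ⟨hx₂, e₂⟩ := hfix M₂ ha₂ (by tauto)
      rw [ih₁ (by omega) (by tauto) (by tauto), e₂]
    · obtain ⟨hx₁, e₁⟩ := hfix M₁ ha (by tauto)
      rw [e₁, ih₂ (by omega) (by tauto) (by tauto)]
  | lam w M ih =>
    by_cases h : w = a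
    · subst h
      rcases hxM with hxM | rfl
      · simp [subst, subst_of_not_mem_fv P hxM]
      · simp [subst]
    · have hwx : w ≠ x := by rintro rfl; simp_all [subst, fv]
      simp only [occ, h, if_false] at hocc
      simp only [subst, fv, h, hwx, if_false, Finset.mem_sdiff] at hx hxM ⊢
      rw [ih hocc (by tauto) hx.1]

theorem mapVars_eq_self {f : ℕ → ℕ} {M : Term} (h : ∀ v ∈ vars M, f v = v) : mapVars f M = M := by
  induction M with
  | var w => simp_all [mapVars, vars]
  | app M₁ M₂ ih₁ ih₂ => simp_all [mapVars, vars]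
  | lam w M ih => simp_all [mapVars, vars]

theorem mapVars_subst {f : ℕ → ℕ} (hf : Function.Injective f) (M : Term) (x : ℕ) (N : Term) :
    mapVars f (subst M x N) = subst (mapVars f M) (f x) (mapVars f N) := by
  induction M with
  | var y => by_cases h : y = x <;> simp [subst, mapVars, h, hf.ne_iff]
  | app M₁ M₂ ih₁ ih₂ => simp [subst, mapVars, ih₁, ih₂]
  | lam y M ih => by_cases h : y = x <;> simp [subst, mapVars, h, hf.ne_iff, ih]

theorem mapVars_swap_subst_var {P : Term} {x y z : ℕ} (hz : z ∉ vars P) (hy : y ∉ vars P) :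
    mapVars (Equiv.swap z y) (subst P x (var z)) = subst P x (var y) := by
  induction P with
  | var w =>
    by_cases h : w = x
    · simp [subst, mapVars, h]
    · simp_all [subst, mapVars, vars, Equiv.swap_apply_of_ne_of_ne, Ne.symm]
  | app M₁ M₂ ih₁ ih₂ => simp_all [subst, mapVars, vars]
  | lam w M ih =>
    simp only [vars, Finset.mem_insert, not_or] at hz hy
    by_cases h : w = x
    · have hfix : ∀ v ∈ vars M, Equiv.swap z y v = v := fun v hv =>
        Equiv.swap_apply_of_ne_of_ne (fun e => hz.2 (e ▸ hv)) (fun e => hy.2 (e ▸ hv))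
      subst h
      simp [subst, mapVars, mapVars_eq_self hfix,
        Equiv.swap_apply_of_ne_of_ne (Ne.symm hz.1) (Ne.symm hy.1)]
    · simp [subst, mapVars, h, Equiv.swap_apply_of_ne_of_ne (Ne.symm hz.1) (Ne.symm hy.1),
        ih hz.2 hy.2]

end Term

theorem Eta.fv_eq {Q P : Term} (h : Eta Q P) : fv Q = fv P := by
  induction h with
  | eta x M hx =>
    ext v
    simp only [fv, Finset.mem_sdiff, Finset.mem_union, Finset.mem_singleton]
    constructor
    · rintro ⟨h | rfl, hv⟩ <;> tauto
    · exact fun hv => ⟨Or.inl hv, fun e => hx (e ▸ hv)⟩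
  | appL N h ih => simp [fv, ih]
  | appR M h ih => simp [fv, ih]
  | lam x h ih => simp [fv, ih]

namespace Term

theorem eta_subst_of_not_mem_fv {M N Q : Term} {y : ℕ} (hy : y ∉ fv M)
    (h : Eta Q (subst M y N)) : Eta Q M ∧ Q = subst Q y N := by
  rw [subst_of_not_mem_fv N hy] at h
  exact ⟨h, (subst_of_not_mem_fv N (h.fv_eq ▸ hy)).symm⟩

theorem eta_root_subst {M N : Term} {y z : ℕ} (hzy : z ≠ y) (hz : z ∉ fv (subst M y N)) :
    Eta (lam z (app M (var z))) M ∧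
      lam z (app (subst M y N) (var z)) = subst (lam z (app M (var z))) y N :=
  ⟨.eta z M fun h => hz (mem_fv_subst_of_mem N h hzy), by simp [subst, hzy]⟩

theorem eta_subst_cases {N : Term} {y : ℕ} {M Q : Term} (hocc : occ M y ≤ 1)
    (hyQ : y ∉ vars Q) (h : Eta Q (subst M y N)) :
    (∃ M', Eta M' M ∧ Q = subst M' y N) ∨ (∃ N', Eta N' N ∧ Q = subst M y N') := by
  by_cases hy : y ∈ fv M
  swap
  · exact .inl ⟨Q, eta_subst_of_not_mem_fv hy h⟩
  induction M generalizing Q with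
  | var v =>
    obtain rfl : y = v := by simpa [fv] using hy
    exact .inr ⟨Q, by simpa [subst] using h, by simp [subst]⟩
  | app A B ihA ihB =>
    simp only [occ] at hocc
    simp only [subst] at h
    cases h with
    | eta z _ hz =>
      have hzy : z ≠ y := by rintro rfl; simp [vars] at hyQ
      exact .inl ⟨_, eta_root_subst (M := app A B) hzy hz⟩
    | @appL QA _ _ h =>
      have hyQ' : y ∉ vars QA := fun h' => hyQ (by simp [vars, h'])
      by_cases hyA : y ∈ fv A
      · have hyB : y ∉ fv B := by
          rw [← occ_eq_zero_iff_not_mem_fv]; have := (occ_pos_iff_mem_fv A y).2 hyA; omega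
        rcases ihA (by omega) hyQ' h hyA with ⟨A', e, rfl⟩ | ⟨N', e, rfl⟩
        · exact .inl ⟨app A' B, .appL B e, rfl⟩
        · exact .inr ⟨N', e, by simp [subst, subst_of_not_mem_fv _ hyB]⟩
      · obtain ⟨e, hQ⟩ := eta_subst_of_not_mem_fv hyA h
        exact .inl ⟨app QA B, .appL B e, by simp [subst, ← hQ]⟩
    | @appR _ QB _ h =>
      have hyQ' : y ∉ vars QB := fun h' => hyQ (by simp [vars, h'])
      by_cases hyB : y ∈ fv B
      · have hyA : y ∉ fv A := by
          rw [← occ_eq_zero_iff_not_mem_fv]; have := (occ_pos_iff_mem_fv B y).2 hyB; omega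
        rcases ihB (by omega) hyQ' h hyB with ⟨B', e, rfl⟩ | ⟨N', e, rfl⟩
        · exact .inl ⟨app A B', .appR A e, rfl⟩
        · exact .inr ⟨N', e, by simp [subst, subst_of_not_mem_fv _ hyA]⟩
      · obtain ⟨e, hQ⟩ := eta_subst_of_not_mem_fv hyB h
        exact .inl ⟨app A QB, .appR A e, by simp [subst, ← hQ]⟩
  | lam w B ih =>
    have hwy : w ≠ y := by rintro rfl; simp [fv] at hy
    simp only [occ, hwy, if_false] at hocc
    simp only [subst, hwy, if_false] at h
    cases h with
    | eta z _ hz =>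
      have hzy : z ≠ y := by rintro rfl; simp [vars] at hyQ
      have := eta_root_subst (M := lam w B) (N := N) hzy (by simpa [subst, hwy] using hz)
      refine .inl ⟨_, this.1, ?_⟩
      rw [← this.2]
      simp [subst, hwy]
    | lam _ h =>
      have hyB : y ∈ fv B := by simp [fv] at hy; exact hy.1
      rcases ih hocc (by simp_all [vars]) h hyB with ⟨B', e, rfl⟩ | ⟨N', e, rfl⟩
      · exact .inl ⟨lam w B', .lam w e, by simp [subst, hwy]⟩
      · exact .inr ⟨N', e, by simp [subst, hwy]⟩

end Term

namespace Env

def mapVars (f : ℕ → ℕ) (Γ : Env) : Env := Γ.map (Prod.map f id)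

theorem dom_cons (p : ℕ × Ty) (Γ : Env) : dom (p :: Γ) = p.1 :: Γ.dom := rfl

theorem dom_append (Γ₁ Γ₂ : Env) : dom (Γ₁ ++ Γ₂) = Γ₁.dom ++ Γ₂.dom := List.map_append

theorem dom_mapVars (f : ℕ → ℕ) (Γ : Env) : (Γ.mapVars f).dom = Γ.dom.map f := by
  simp [mapVars, dom]

theorem mapVars_cons (f : ℕ → ℕ) (p : ℕ × Ty) (Γ : Env) :
    mapVars f (p :: Γ) = (f p.1, p.2) :: Γ.mapVars f := rfl

theorem mapVars_append (f : ℕ → ℕ) (Γ₁ Γ₂ : Env) :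
    mapVars f (Γ₁ ++ Γ₂) = Γ₁.mapVars f ++ Γ₂.mapVars f := List.map_append

theorem mapVars_eq_self {f : ℕ → ℕ} {Γ : Env} (h : ∀ v ∈ Γ.dom, f v = v) : Γ.mapVars f = Γ := by
  induction Γ with
  | nil => rfl
  | cons p Γ ih =>
    simp only [dom_cons, List.mem_cons, forall_eq_or_imp] at h
    rw [mapVars_cons, h.1, ih h.2]

theorem mapVars_perm (f : ℕ → ℕ) {Γ Γ' : Env} (h : Γ.Perm Γ') : (Γ.mapVars f).Perm (Γ'.mapVars f) :=
  h.map _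

theorem mapVars_update_of_not_mem {Γ : Env} {x : ℕ} (hx : x ∉ Γ.dom) (y : ℕ) :
    Γ.mapVars (Function.update id x y) = Γ :=
  mapVars_eq_self fun v hv => Function.update_of_ne (fun e : v = x => hx (e ▸ hv)) _ _

theorem mapVars_swap_update {Γ : Env} {x y z : ℕ} (hz : z ∉ Γ.dom) (hy : y ∉ Γ.dom) :
    (Γ.mapVars (Function.update id x z)).mapVars (Equiv.swap z y) =
      Γ.mapVars (Function.update id x y) := by
  simp only [mapVars, List.map_map]
  refine List.map_congr_left fun ⟨v, β⟩ hp => ?_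
  have hv : v ∈ Γ.dom := List.mem_map_of_mem (f := Prod.fst) hp
  have hvz : v ≠ z := fun e => hz (e ▸ hv)
  have hvy : v ≠ y := fun e => hy (e ▸ hv)
  by_cases h : v = x <;> simp [h, Equiv.swap_apply_of_ne_of_ne, hvz, hvy]

end Env

theorem envDisj_mapVars {f : ℕ → ℕ} {Γ₁ Γ₂ : Env} (h : ∀ v ∈ Γ₁.dom, ∀ w ∈ Γ₂.dom, f v ≠ f w) :
    EnvDisj (Γ₁.mapVars f) (Γ₂.mapVars f) := by
  simp only [EnvDisj, Env.dom_mapVars, List.mem_map]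
  rintro _ ⟨v, hv, rfl⟩ ⟨w, hw, he⟩
  exact h v hv w hw he.symm

theorem EnvDisj.mapVars_of_injective {f : ℕ → ℕ} {Γ₁ Γ₂ : Env} (hd : EnvDisj Γ₁ Γ₂)
    (hf : Function.Injective f) : EnvDisj (Γ₁.mapVars f) (Γ₂.mapVars f) :=
  envDisj_mapVars fun v hv _ hw he => hd v hv (hf he ▸ hw)

theorem EnvDisj.rename {Γ₁ Γ₂ : Env} (hd : EnvDisj Γ₁ Γ₂) {x y : ℕ} (hy₁ : y ∉ Γ₁.dom)
    (hy₂ : y ∉ Γ₂.dom) :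
    EnvDisj (Γ₁.mapVars (Function.update id x y)) (Γ₂.mapVars (Function.update id x y)) := by
  refine envDisj_mapVars fun v hv w hw => ?_
  have hvw : v ≠ w := fun e => hd v hv (e ▸ hw)
  by_cases hvx : v = x <;> by_cases hwx : w = x <;>
    simp [hvx, hwx, hvw] <;> grind

namespace Deriv

theorem dom_nodup {Γ M σ} (h : Deriv Γ M σ) : Γ.dom.Nodup := by
  induction h with
  | ax x σ => simp [Env.dom]
  | perm _ hp ih => exact (hp.map Prod.fst).nodup_iff.1 ih
  | arrI _ ih => exact (List.nodup_cons.1 ih).2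
  | arrE _ _ hd ih₁ ih₂ => exact Env.dom_append _ _ ▸ ih₁.append ih₂ hd
  | orE _ _ _ hd ih₁ _ ih₃ =>
    exact Env.dom_append _ _ ▸ (List.nodup_cons.1 ih₁).2.append ih₃ hd
  | _ => assumption

theorem head_not_mem_dom {Γ : Env} {x : ℕ} {β : Ty} {M ρ} (h : Deriv ((x, β) :: Γ) M ρ) :
    x ∉ Γ.dom :=
  (List.nodup_cons.1 h.dom_nodup).1

theorem fv_subset_dom {Γ M σ} (h : Deriv Γ M σ) : ∀ v ∈ fv M, v ∈ Γ.dom := by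
  induction h with
  | ax x σ => simp [fv, Env.dom]
  | perm _ hp ih => exact fun v hv => (hp.map Prod.fst).subset (ih v hv)
  | arrI _ ih =>
    intro v hv
    simp only [fv, Finset.mem_sdiff, Finset.mem_singleton] at hv
    exact (List.mem_cons.1 (ih v hv.1)).resolve_left hv.2
  | arrE _ _ _ ih₁ ih₂ =>
    intro v hv
    simp only [fv, Finset.mem_union] at hv
    rw [Env.dom_append, List.mem_append]
    exact hv.imp (ih₁ v) (ih₂ v)
  | orE _ _ _ _ ih₁ _ ih₃ =>
    intro v hv
    rw [Env.dom_append, List.mem_append]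
    exact (mem_fv_subst hv).imp
      (fun h => (List.mem_cons.1 (ih₁ v h.1)).resolve_left h.2) (ih₃ v)
  | _ => assumption

theorem occ_le_count {Γ M σ} (h : Deriv Γ M σ) : ∀ v, occ M v ≤ Γ.dom.count v := by
  induction h with
  | ax x σ => intro v; by_cases h : x = v <;> simp [occ, Env.dom, h]
  | perm _ hp ih => exact fun v => (ih v).trans_eq ((hp.map Prod.fst).count_eq v)
  | arrI _ ih =>
    rename_i x _ _ _ _
    intro v
    have := ih v
    by_cases hxv : x = v <;> simp_all [occ, Env.dom_cons, List.count_cons, Ne.symm]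
  | arrE _ _ _ ih₁ ih₂ =>
    intro v
    simp only [occ, Env.dom_append, List.count_append]
    exact Nat.add_le_add (ih₁ v) (ih₂ v)
  | @orE Γ₁ Γ₂ x M N _ _ _ _ h₁ _ _ _ ih₁ _ ih₃ =>
    intro v
    have hx : (Env.dom Γ₁).count x = 0 := List.count_eq_zero.2 h₁.head_not_mem_dom
    have hMx := ih₁ x
    have hMv := ih₁ v
    have hsub := occ_subst_le M x N v
    have hN := ih₃ v
    simp only [Env.dom_cons, List.count_cons, beq_iff_eq, hx, if_true] at hMx hMv
    rw [Env.dom_append, List.count_append]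
    by_cases hvx : v = x
    · simp only [hvx, if_true] at hsub hMv hN ⊢
      nlinarith
    · simp only [hvx, if_false, Ne.symm hvx] at hsub hMv
      nlinarith
  | _ => assumption

theorem occ_head_le_one {Γ : Env} {x : ℕ} {β : Ty} {M ρ} (h : Deriv ((x, β) :: Γ) M ρ) :
    occ M x ≤ 1 := by
  have := h.occ_le_count x
  simpa [Env.dom_cons, List.count_cons, List.count_eq_zero.2 h.head_not_mem_dom] using this

end Deriv

/-- `Deriv` with a bound on the height. Renaming (`DerivN.rename`) preserves the bound, so the
induction of `DerivN.deriv_of_eta` may be applied to renamed subderivations. -/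
inductive DerivN : ℕ → Env → Term → Ty → Prop
  | ax (n x σ) : DerivN n [(x, σ)] (var x) σ
  | eqv {n Γ M σ τ} : DerivN n Γ M σ → SemEq σ τ → DerivN (n + 1) Γ M τ
  | perm {n Γ Γ' M σ} : DerivN n Γ M σ → Γ.Perm Γ' → DerivN (n + 1) Γ' M σ
  | arrI {n Γ x σ M τ} : DerivN n ((x, σ) :: Γ) M τ →
      DerivN (n + 1) Γ (lam x M) (Ty.arr σ τ)
  | arrE {n Γ₁ Γ₂ M N σ τ} : DerivN n Γ₁ M (Ty.arr σ τ) → DerivN n Γ₂ N σ → EnvDisj Γ₁ Γ₂ →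
      DerivN (n + 1) (Γ₁ ++ Γ₂) (app M N) τ
  | andI {n Γ M σ τ} : DerivN n Γ M σ → DerivN n Γ M τ → DerivN (n + 1) Γ M (Ty.and σ τ)
  | andE₁ {n Γ M σ τ} : DerivN n Γ M (Ty.and σ τ) → DerivN (n + 1) Γ M σ
  | andE₂ {n Γ M σ τ} : DerivN n Γ M (Ty.and σ τ) → DerivN (n + 1) Γ M τ
  | orI₁ {n Γ M σ τ} : DerivN n Γ M σ → DerivN (n + 1) Γ M (Ty.or σ τ)
  | orI₂ {n Γ M σ τ} : DerivN n Γ M σ → DerivN (n + 1) Γ M (Ty.or τ σ)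
  | orE {n Γ₁ Γ₂ x M N σ τ ζ ρ} :
      DerivN n ((x, Ty.and σ ζ) :: Γ₁) M ρ →
      DerivN n ((x, Ty.and τ ζ) :: Γ₁) M ρ →
      DerivN n Γ₂ N (Ty.and (Ty.or σ τ) ζ) → EnvDisj Γ₁ Γ₂ →
      DerivN (n + 1) (Γ₁ ++ Γ₂) (subst M x N) ρ

namespace DerivN

theorem toDeriv {n Γ M σ} (h : DerivN n Γ M σ) : Deriv Γ M σ := by
  induction h with
  | ax n x σ => exact .ax x σ
  | eqv _ he ih => exact ih.eqv he
  | perm _ hp ih => exact ih.perm hp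
  | arrI _ ih => exact ih.arrI
  | arrE _ _ hd ih₁ ih₂ => exact ih₁.arrE ih₂ hd
  | andI _ _ ih₁ ih₂ => exact ih₁.andI ih₂
  | andE₁ _ ih => exact ih.andE₁
  | andE₂ _ ih => exact ih.andE₂
  | orI₁ _ ih => exact ih.orI₁
  | orI₂ _ ih => exact ih.orI₂
  | orE _ _ _ hd ih₁ ih₂ ih₃ => exact .orE ih₁ ih₂ ih₃ hd

theorem succ {n Γ M σ} (h : DerivN n Γ M σ) : DerivN (n + 1) Γ M σ := by
  induction h with
  | ax n x σ => exact .ax _ x σ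
  | eqv _ he ih => exact ih.eqv he
  | perm _ hp ih => exact ih.perm hp
  | arrI _ ih => exact ih.arrI
  | arrE _ _ hd ih₁ ih₂ => exact ih₁.arrE ih₂ hd
  | andI _ _ ih₁ ih₂ => exact ih₁.andI ih₂
  | andE₁ _ ih => exact ih.andE₁
  | andE₂ _ ih => exact ih.andE₂
  | orI₁ _ ih => exact ih.orI₁
  | orI₂ _ ih => exact ih.orI₂
  | orE _ _ _ hd ih₁ ih₂ ih₃ => exact .orE ih₁ ih₂ ih₃ hd

theorem mono {n m Γ M σ} (h : DerivN n Γ M σ) (hnm : n ≤ m) : DerivN m Γ M σ := by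
  induction hnm with
  | refl => exact h
  | step _ ih => exact ih.succ

theorem mapVars {f : ℕ → ℕ} (hf : Function.Injective f) {n Γ M σ} (h : DerivN n Γ M σ) :
    DerivN n (Γ.mapVars f) (M.mapVars f) σ := by
  induction h with
  | ax n x σ => exact .ax n (f x) σ
  | eqv _ he ih => exact ih.eqv he
  | perm _ hp ih => exact ih.perm (Env.mapVars_perm f hp)
  | arrI _ ih => exact ih.arrI
  | arrE _ _ hd ih₁ ih₂ =>
    rw [Env.mapVars_append]
    exact ih₁.arrE ih₂ (hd.mapVars_of_injective hf)
  | andI _ _ ih₁ ih₂ => exact ih₁.andI ih₂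
  | andE₁ _ ih => exact ih.andE₁
  | andE₂ _ ih => exact ih.andE₂
  | orI₁ _ ih => exact ih.orI₁
  | orI₂ _ ih => exact ih.orI₂
  | orE _ _ _ hd ih₁ ih₂ ih₃ =>
    rw [Env.mapVars_append, mapVars_subst hf]
    exact .orE ih₁ ih₂ ih₃ (hd.mapVars_of_injective hf)

end DerivN

theorem Deriv.exists_derivN {Γ M σ} (h : Deriv Γ M σ) : ∃ n, DerivN n Γ M σ := by
  induction h with
  | ax x σ => exact ⟨0, .ax 0 x σ⟩
  | eqv _ he ih => obtain ⟨n, hn⟩ := ih; exact ⟨n + 1, hn.eqv he⟩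
  | perm _ hp ih => obtain ⟨n, hn⟩ := ih; exact ⟨n + 1, hn.perm hp⟩
  | arrI _ ih => obtain ⟨n, hn⟩ := ih; exact ⟨n + 1, hn.arrI⟩
  | arrE _ _ hd ih₁ ih₂ =>
    obtain ⟨n₁, h₁⟩ := ih₁; obtain ⟨n₂, h₂⟩ := ih₂
    exact ⟨max n₁ n₂ + 1, (h₁.mono (le_max_left _ _)).arrE (h₂.mono (le_max_right _ _)) hd⟩
  | andI _ _ ih₁ ih₂ =>
    obtain ⟨n₁, h₁⟩ := ih₁; obtain ⟨n₂, h₂⟩ := ih₂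
    exact ⟨max n₁ n₂ + 1, (h₁.mono (le_max_left _ _)).andI (h₂.mono (le_max_right _ _))⟩
  | andE₁ _ ih => obtain ⟨n, hn⟩ := ih; exact ⟨n + 1, hn.andE₁⟩
  | andE₂ _ ih => obtain ⟨n, hn⟩ := ih; exact ⟨n + 1, hn.andE₂⟩
  | orI₁ _ ih => obtain ⟨n, hn⟩ := ih; exact ⟨n + 1, hn.orI₁⟩
  | orI₂ _ ih => obtain ⟨n, hn⟩ := ih; exact ⟨n + 1, hn.orI₂⟩
  | orE _ _ _ hd ih₁ ih₂ ih₃ =>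
    obtain ⟨n₁, h₁⟩ := ih₁; obtain ⟨n₂, h₂⟩ := ih₂; obtain ⟨n₃, h₃⟩ := ih₃
    refine ⟨max (max n₁ n₂) n₃ + 1, .orE (h₁.mono ?_) (h₂.mono ?_) (h₃.mono ?_) hd⟩ <;> omega

namespace DerivN

variable {n : ℕ} {Γ : Env} {P : Term} {σ : Ty}

theorem rename_retarget {x y z : ℕ}
    (h : DerivN n (Γ.mapVars (Function.update id x z)) (subst P x (var z)) σ)
    (hzΓ : z ∉ Γ.dom) (hzP : z ∉ vars P) (hyΓ : y ∉ Γ.dom) (hyP : y ∉ vars P) :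
    DerivN n (Γ.mapVars (Function.update id x y)) (subst P x (var y)) σ := by
  have := h.mapVars (Equiv.swap z y).injective
  rwa [Env.mapVars_swap_update hzΓ hyΓ, mapVars_swap_subst_var hzP hyP] at this

theorem rename_of_not_mem_dom (h : DerivN n Γ P σ) {x : ℕ} (hx : x ∉ Γ.dom) (y : ℕ) :
    DerivN n (Γ.mapVars (Function.update id x y)) (subst P x (var y)) σ := by
  rwa [Env.mapVars_update_of_not_mem hx,
    subst_of_not_mem_fv _ fun h' => hx (h.toDeriv.fv_subset_dom x h')]

theorem rename_orE_left {Γ₁ Γ₂ : Env} {x' : ℕ} {M N : Term} {σ τ ζ ρ : Ty}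
    (D₁ : DerivN n ((x', Ty.and σ ζ) :: Γ₁) M ρ) (D₃ : DerivN n Γ₂ N (Ty.and (Ty.or σ τ) ζ))
    (hd : EnvDisj Γ₁ Γ₂)
    (ih₁ : ∀ {x y : ℕ}, x ∈ fv M → y ∉ Env.dom ((x', Ty.and σ ζ) :: Γ₁) → y ∉ vars M →
      DerivN n (Env.mapVars (Function.update id x y) ((x', Ty.and σ ζ) :: Γ₁))
        (subst M x (var y)) ρ)
    (ih₂ : ∀ {x y : ℕ}, x ∈ fv M → y ∉ Env.dom ((x', Ty.and τ ζ) :: Γ₁) → y ∉ vars M →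
      DerivN n (Env.mapVars (Function.update id x y) ((x', Ty.and τ ζ) :: Γ₁))
        (subst M x (var y)) ρ)
    {x y : ℕ} (hxΓ₁ : x ∈ Env.dom Γ₁) (hx : x ∈ fv (subst M x' N))
    (hyΓ : y ∉ Env.dom (Γ₁ ++ Γ₂)) (hyP : y ∉ vars (subst M x' N)) :
    DerivN (n + 1) ((Γ₁ ++ Γ₂).mapVars (Function.update id x y))
      (subst (subst M x' N) x (var y)) ρ := by
  have hxΓ₂ : x ∉ Env.dom Γ₂ := hd x hxΓ₁
  have hxx' : x ≠ x' := fun e => D₁.toDeriv.head_not_mem_dom (e ▸ hxΓ₁)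
  have hxN : x ∉ fv N := fun h => hxΓ₂ (D₃.toDeriv.fv_subset_dom x h)
  have hxM : x ∈ fv M := ((mem_fv_subst hx).resolve_right hxN).1
  obtain ⟨z, hz⟩ := Infinite.exists_notMem_finset
    (vars M ∪ vars N ∪ (Env.dom (Γ₁ ++ Γ₂)).toFinset ∪ {x'})
  simp only [Finset.mem_union, List.mem_toFinset, Finset.mem_singleton, not_or] at hz
  obtain ⟨⟨⟨hzM, hzN⟩, hzΓ⟩, hzx'⟩ := hz
  have hzΓ' : z ∉ Env.dom Γ₁ ∧ z ∉ Env.dom Γ₂ := by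
    simpa [Env.dom_append, not_or] using hzΓ
  have hzP : z ∉ vars (subst M x' N) := fun h => by
    rcases Finset.mem_union.1 (vars_subst_subset M x' N h) with h | h <;> contradiction
  -- `y` may be the variable `x'` of the (∨E) step: rename into a fresh `z`, then swap `z` and `y`
  refine rename_retarget ?_ hzΓ hzP hyΓ hyP
  have hdom : ∀ β, z ∉ Env.dom ((x', β) :: Γ₁) := fun β => by
    simp [Env.dom_cons, hzx', hzΓ'.1]
  have R₁ := ih₁ hxM (hdom _) hzM
  have R₂ := ih₂ hxM (hdom _) hzM
  rw [Env.mapVars_cons, Function.update_of_ne (Ne.symm hxx')] at R₁ R₂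
  have hd' := hd.rename (x := x) hzΓ'.1 hzΓ'.2
  rw [Env.mapVars_update_of_not_mem hxΓ₂] at hd'
  rw [Env.mapVars_append, Env.mapVars_update_of_not_mem hxΓ₂, ← subst_comm_var hxx' hzx' hxN]
  exact .orE R₁ R₂ D₃ hd'

theorem rename_orE_right {Γ₁ Γ₂ : Env} {x' : ℕ} {M N : Term} {σ τ ζ ρ : Ty}
    (D₁ : DerivN n ((x', Ty.and σ ζ) :: Γ₁) M ρ) (D₂ : DerivN n ((x', Ty.and τ ζ) :: Γ₁) M ρ)
    (hd : EnvDisj Γ₁ Γ₂)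
    (ih₃ : ∀ {x y : ℕ}, x ∈ fv N → y ∉ Γ₂.dom → y ∉ vars N →
      DerivN n (Γ₂.mapVars (Function.update id x y)) (subst N x (var y))
        (Ty.and (Ty.or σ τ) ζ))
    {x y : ℕ} (hxΓ₁ : x ∉ Env.dom Γ₁) (hx : x ∈ fv (subst M x' N))
    (hyΓ : y ∉ Env.dom (Γ₁ ++ Γ₂)) (hyP : y ∉ vars (subst M x' N)) :
    DerivN (n + 1) ((Γ₁ ++ Γ₂).mapVars (Function.update id x y))
      (subst (subst M x' N) x (var y)) ρ := by
  rw [Env.dom_append, List.mem_append, not_or] at hyΓ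
  have hxM : x ∉ fv M ∨ x = x' := by
    refine or_iff_not_imp_left.2 fun h => ?_
    exact (List.mem_cons.1 (D₁.toDeriv.fv_subset_dom x (not_not.1 h))).resolve_right hxΓ₁
  have hxN : x ∈ fv N := (mem_fv_subst hx).resolve_left fun h => by
    rcases hxM with h' | rfl
    exacts [h' h.1, h.2 rfl]
  have hx'M : x' ∈ fv M := by
    by_contra h
    rw [subst_of_not_mem_fv N h] at hx
    rcases hxM with h' | rfl
    exacts [h' hx, h hx]
  have hyN : y ∉ vars N := fun h => hyP (mem_vars_subst_of_mem_fv hx'M h)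
  have hd' := hd.rename (x := x) hyΓ.1 hyΓ.2
  rw [Env.mapVars_update_of_not_mem hxΓ₁] at hd'
  rw [Env.mapVars_append, Env.mapVars_update_of_not_mem hxΓ₁,
    ← subst_subst_of_mem_fv D₁.toDeriv.occ_head_le_one hxM hx]
  exact .orE D₁ D₂ (ih₃ hxN hyΓ.2 hyN) hd'

theorem rename (h : DerivN n Γ P σ) {x y : ℕ} (hx : x ∈ fv P) (hyΓ : y ∉ Γ.dom)
    (hyP : y ∉ vars P) :
    DerivN n (Γ.mapVars (Function.update id x y)) (subst P x (var y)) σ := by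
  induction h generalizing x y with
  | ax n v σ =>
    obtain rfl : x = v := by simpa [fv] using hx
    simpa [Env.mapVars, subst] using DerivN.ax n y σ
  | eqv _ he ih => exact (ih hx hyΓ hyP).eqv he
  | perm _ hp ih =>
    exact (ih hx (fun h => hyΓ ((hp.map Prod.fst).subset h)) hyP).perm (Env.mapVars_perm _ hp)
  | @arrI n Γ w α M τ _ ih =>
    simp only [fv, Finset.mem_sdiff, Finset.mem_singleton] at hx
    simp only [vars, Finset.mem_insert, not_or] at hyP
    have hwx : w ≠ x := fun e => hx.2 e.symm
    have := ih hx.1 (by simp [Env.dom_cons, hyP.1, hyΓ]) hyP.2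
    rw [Env.mapVars_cons, Function.update_of_ne hwx] at this
    simpa [subst, hwx] using this.arrI
  | @arrE n Γ₁ Γ₂ M₁ M₂ α τ D₁ D₂ hd ih₁ ih₂ =>
    simp only [Env.dom_append, List.mem_append, not_or] at hyΓ
    simp only [vars, Finset.mem_union, not_or] at hyP
    have hf := hd.rename (x := x) hyΓ.1 hyΓ.2
    rw [Env.mapVars_append]
    by_cases hx₁ : x ∈ fv M₁
    · have hxΓ₂ : x ∉ Env.dom Γ₂ := hd x (D₁.toDeriv.fv_subset_dom x hx₁)
      exact (ih₁ hx₁ hyΓ.1 hyP.1).arrE (D₂.rename_of_not_mem_dom hxΓ₂ y) hf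
    · have hx₂ : x ∈ fv M₂ := by simpa [fv, hx₁] using hx
      have hxΓ₁ : x ∉ Env.dom Γ₁ := fun h => hd x h (D₂.toDeriv.fv_subset_dom x hx₂)
      exact (D₁.rename_of_not_mem_dom hxΓ₁ y).arrE (ih₂ hx₂ hyΓ.2 hyP.2) hf
  | andI _ _ ih₁ ih₂ => exact (ih₁ hx hyΓ hyP).andI (ih₂ hx hyΓ hyP)
  | andE₁ _ ih => exact (ih hx hyΓ hyP).andE₁
  | andE₂ _ ih => exact (ih hx hyΓ hyP).andE₂
  | orI₁ _ ih => exact (ih hx hyΓ hyP).orI₁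
  | orI₂ _ ih => exact (ih hx hyΓ hyP).orI₂
  | @orE n Γ₁ Γ₂ x' M N σ τ ζ ρ D₁ D₂ D₃ hd ih₁ ih₂ ih₃ =>
    by_cases hxΓ₁ : x ∈ Env.dom Γ₁
    · exact rename_orE_left D₁ D₃ hd ih₁ ih₂ hxΓ₁ hx hyΓ hyP
    · exact rename_orE_right D₁ D₂ hd ih₃ hxΓ₁ hx hyΓ hyP

theorem rename_head {x : ℕ} {β : Ty} (h : DerivN n ((x, β) :: Γ) P σ) (hx : x ∈ fv P) {y : ℕ}
    (hyΓ : y ∉ Γ.dom) (hyP : y ∉ vars P) :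
    DerivN n ((y, β) :: Γ) (subst P x (var y)) σ := by
  have hyx : y ≠ x := fun e => hyP (e ▸ fv_subset_vars P hx)
  have := h.rename hx (by simp [Env.dom_cons, hyx, hyΓ]) hyP
  rwa [Env.mapVars_cons, Function.update_self,
    Env.mapVars_update_of_not_mem h.toDeriv.head_not_mem_dom] at this

end DerivN

theorem Deriv.eta_expand_arr {Γ : Env} {M : Term} {α β : Ty} (h : Deriv Γ M (Ty.arr α β))
    {x : ℕ} (hx : x ∉ Γ.dom) : Deriv Γ (lam x (app M (var x))) (Ty.arr α β) := by
  have hd : EnvDisj Γ [(x, α)] := fun v hv hv' => hx (by simp_all [Env.dom])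
  exact ((h.arrE (.ax x α) hd).perm (List.perm_append_comm (l₂ := [(x, α)]))).arrI

theorem Deriv.eta_expand_of_not_mem_dom {Γ : Env} {M : Term} {σ : Ty} (h : Deriv Γ M σ) {x : ℕ}
    (hx : x ∉ Γ.dom) : Deriv Γ (lam x (app M (var x))) σ := by
  induction σ generalizing Γ M with
  | atom a => exact ((h.eqv (.atomFun a)).eta_expand_arr hx).eqv (.symm (.atomFun a))
  | omega => exact ((h.eqv .omegaFun).eta_expand_arr hx).eqv (.symm .omegaFun)
  | arr α β _ _ => exact h.eta_expand_arr hx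
  | and σ₁ σ₂ ih₁ ih₂ => exact (ih₁ h.andE₁ hx).andI (ih₂ h.andE₂ hx)
  | or σ₁ σ₂ ih₁ ih₂ =>
    have hzx : x + 1 ≠ x := by omega
    have hx' : ∀ ρ, x ∉ Env.dom [(x + 1, ρ)] := by simp [Env.dom]
    have P₁ := (ih₁ (Deriv.ax (x + 1) (Ty.and σ₁ Ty.omega)).andE₁ (hx' _)).orI₁ (τ := σ₂)
    have P₂ := (ih₂ (Deriv.ax (x + 1) (Ty.and σ₂ Ty.omega)).andE₁ (hx' _)).orI₂ (τ := σ₁)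
    have P₃ : Deriv Γ M (Ty.and (Ty.or σ₁ σ₂) Ty.omega) := h.andI (h.eqv (.andOmegaR _)).andE₂
    simpa [subst, Ne.symm hzx] using Deriv.orE (Γ₁ := []) P₁ P₂ P₃ (by simp [EnvDisj, Env.dom])

/-- No freshness of `x` is needed: the substitution of (∨E) may capture it. -/
theorem Deriv.eta_expand {Γ M σ} (h : Deriv Γ M σ) (x : ℕ) :
    Deriv Γ (lam x (app M (var x))) σ := by
  have hyx : x + 1 ≠ x := by omega
  have P₁ := (Deriv.ax (x + 1) (Ty.and Ty.omega σ)).andE₂.eta_expand_of_not_mem_dom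
    (x := x) (by simp [Env.dom])
  have P₃ : Deriv Γ M (Ty.and (Ty.or Ty.omega Ty.omega) σ) :=
    (h.eqv (.andOmegaR σ)).andE₂.orI₁.andI h
  simpa [subst, Ne.symm hyx] using Deriv.orE (Γ₁ := []) P₁ P₁ P₃ (by simp [EnvDisj, Env.dom])

theorem DerivN.deriv_of_eta_orE {n Γ₁ Γ₂ x' M N σ τ ζ ρ}
    (ih : ∀ {Γ P σ}, DerivN n Γ P σ → ∀ {Q}, Eta Q P → Deriv Γ Q σ)
    (D₁ : DerivN n ((x', Ty.and σ ζ) :: Γ₁) M ρ) (D₂ : DerivN n ((x', Ty.and τ ζ) :: Γ₁) M ρ)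
    (D₃ : DerivN n Γ₂ N (Ty.and (Ty.or σ τ) ζ)) (hd : EnvDisj Γ₁ Γ₂) {Q : Term}
    (hQ : Eta Q (subst M x' N)) : Deriv (Γ₁ ++ Γ₂) Q ρ := by
  by_cases hx' : x' ∈ fv M
  swap
  · rw [subst_of_not_mem_fv N hx'] at hQ
    have hx'Q : x' ∉ fv Q := hQ.fv_eq ▸ hx'
    simpa [subst_of_not_mem_fv N hx'Q] using Deriv.orE (ih D₁ hQ) (ih D₂ hQ) D₃.toDeriv hd
  -- rename `x'` apart from `Q`, so that the η-redex of `Q` cannot bind it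
  obtain ⟨y, hy⟩ := Infinite.exists_notMem_finset
    (vars M ∪ vars Q ∪ (Env.dom Γ₁).toFinset)
  simp only [Finset.mem_union, List.mem_toFinset, not_or] at hy
  obtain ⟨⟨hyM, hyQ⟩, hyΓ₁⟩ := hy
  have R₁ := D₁.rename_head hx' hyΓ₁ hyM
  have R₂ := D₂.rename_head hx' hyΓ₁ hyM
  rw [← subst_subst_var N hyM] at hQ
  rcases eta_subst_cases R₁.toDeriv.occ_head_le_one hyQ hQ with ⟨M₁, e, rfl⟩ | ⟨N₁, e, rfl⟩
  · exact .orE (ih R₁ e) (ih R₂ e) D₃.toDeriv hd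
  · exact .orE R₁.toDeriv R₂.toDeriv (ih D₃ e) hd

theorem DerivN.deriv_of_eta {n Γ P σ} (h : DerivN n Γ P σ) {Q : Term} (hQ : Eta Q P) :
    Deriv Γ Q σ := by
  induction n generalizing Γ P σ Q with
  | zero => cases h with | ax => cases hQ with | eta z _ _ => exact (Deriv.ax _ _).eta_expand z
  | succ n ih =>
    cases h with
    | ax => cases hQ with | eta z _ _ => exact (Deriv.ax _ _).eta_expand z
    | eqv D he => exact (ih D hQ).eqv he
    | perm D hp => exact (ih D hQ).perm hp
    | arrI D =>
      cases hQ with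
      | eta z _ _ => exact D.toDeriv.arrI.eta_expand z
      | lam _ hQ => exact (ih D hQ).arrI
    | arrE D₁ D₂ hd =>
      cases hQ with
      | eta z _ _ => exact (D₁.toDeriv.arrE D₂.toDeriv hd).eta_expand z
      | appL _ hQ => exact (ih D₁ hQ).arrE D₂.toDeriv hd
      | appR _ hQ => exact D₁.toDeriv.arrE (ih D₂ hQ) hd
    | andI D₁ D₂ => exact (ih D₁ hQ).andI (ih D₂ hQ)
    | andE₁ D => exact (ih D hQ).andE₁
    | andE₂ D => exact (ih D hQ).andE₂
    | orI₁ D => exact (ih D hQ).orI₁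
    | orI₂ D => exact (ih D hQ).orI₂
    | orE D₁ D₂ D₃ hd => exact deriv_of_eta_orE ih D₁ D₂ D₃ hd hQ

theorem Deriv.of_eta {Γ P σ} (h : Deriv Γ P σ) {Q : Term} (hQ : Eta Q P) : Deriv Γ Q σ :=
  let ⟨_, hn⟩ := h.exists_derivN
  hn.deriv_of_eta hQ

theorem Deriv.of_etaStar {Γ : Env} {M N : Term} {σ : Ty} (h : Deriv Γ N σ) (hMN : EtaStar M N) :
    Deriv Γ M σ := by
  induction hMN using Relation.ReflTransGen.head_induction_on with
  | refl => exact h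
  | head hstep _ ih => exact ih.of_eta hstep

/-- Subject expansion for η: if `M` is linear, `M →η* N` and `Γ ⊢ N : σ`, then
`Γ ⊢ M : σ`; in particular if `x ∉ fv M` and `Γ ⊢ M : σ` then `Γ ⊢ λx. M x : σ`. -/
theorem subject_expansion_eta :
    (∀ (Γ : Env) (M N : Term) (σ : Ty),
        Linear M → EtaStar M N → Deriv Γ N σ → Deriv Γ M σ) ∧
    (∀ (Γ : Env) (M : Term) (x : ℕ) (σ : Ty),
        Linear M → x ∉ fv M → Deriv Γ M σ →
        Deriv Γ (Term.lam x (Term.app M (Term.var x))) σ) :=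
  ⟨fun _ _ _ _ _ hMN hN => hN.of_etaStar hMN, fun _ _ x _ _ _ hM => hM.eta_expand x⟩

end TypeIso
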